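/- Let T>0, E a Banach space, V a Banach space densely and continuously embedded in E, and {A(t)}_{t∈[0,T]} a family of linear operators on E satisfying (Hyp'1) with constant ω>0, (Hyp3) and (Hyp4), and let Â denote the closure of A_0 := (1/T)∫_0^T A(τ)dτ (with domain V) in E. Then the interval (−ω,+∞) is contained in the resolvent set of Â, and for every μ > −ω the set (μI − A_0)V is dense in E. -/

import Mathlib

/-!
The semigroup bound `‖S_{A(t)}(s)‖ ≤ e^{-ωs}` makes each `A(t) + ω` dissipative: for a norming
functional `g` of `x ∈ V`, `g (A(t) x) ≤ -ω ‖x‖`. This survives averaging in `t`, so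
`(μ + ω) ‖x‖ ≤ ‖(μ - A₀) x‖`, and the bound passes to the closure of the graph of `A₀`, which is
again a graph since `V` is dense. Hence `μ - Â` is injective with closed range for `μ > -ω`;
(Hyp4) makes it onto at `μ₀`, with `‖(μ₀ - Â)⁻¹‖ ≤ (μ₀ + ω)⁻¹`. A Neumann series carries
invertibility from `ν` to every `μ` with `|μ - ν| < ν + ω`, which covers `(-ω, ∞)` in finitely
many steps. Finally `(μ - A₀)V` is dense because its closure contains the range of `μ - Â`.
-/

open Filter Topology Set MeasureTheory

noncomputable section

variable {E : Type*} [NormedAddCommGroup E] [NormedSpace ℝ E]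

/-- A C₀ semigroup of bounded linear operators on `E`. -/
structure IsC0Semigroup (S : ℝ → E →L[ℝ] E) : Prop where
  map_zero : S 0 = 1
  map_add : ∀ ⦃t s : ℝ⦄, 0 ≤ t → 0 ≤ s → S (t + s) = (S t).comp (S s)
  strong_cont : ∀ x : E, ContinuousOn (fun t => S t x) (Ici (0 : ℝ))

/-- `y` is the limit of `t⁻¹ • (S t x - x)` as `t → 0⁺`. -/
def GenLimitAt (S : ℝ → E →L[ℝ] E) (x y : E) : Prop :=
  Tendsto (fun t : ℝ => t⁻¹ • (S t x - x)) (𝓝[>] (0 : ℝ)) (𝓝 y)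

/-- The (unbounded) operator with domain `D` and action `A` is the generator of `S`. -/
def IsGeneratorOf (D : Set E) (A : E → E) (S : ℝ → E →L[ℝ] E) : Prop :=
  (∀ x, x ∈ D ↔ ∃ y, GenLimitAt S x y) ∧ ∀ x ∈ D, GenLimitAt S x (A x)

/-- Graph of an operator with domain `D` and action `A`. -/
def opGraph (D : Set E) (A : E → E) : Set (E × E) := {p | p.1 ∈ D ∧ p.2 = A p.1}

/-- The operator `(D, A)` is closable: the closure of its graph is a graph of a function. -/
def IsClosableOp (D : Set E) (A : E → E) : Prop :=
  ∀ x y₁ y₂, (x, y₁) ∈ closure (opGraph D A) → (x, y₂) ∈ closure (opGraph D A) → y₁ = y₂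

/-- `(D', A')` is the closure of the operator `(D, A)`. -/
def IsClosureOf (D' : Set E) (A' : E → E) (D : Set E) (A : E → E) : Prop :=
  (∀ x, x ∈ D' ↔ ∃ y, (x, y) ∈ closure (opGraph D A)) ∧
  ∀ x ∈ D', (x, A' x) ∈ closure (opGraph D A)

/-- `(D, A)` is a linear operator (its domain is a subspace on which it acts linearly). -/
def IsLinearOp (D : Set E) (A : E → E) : Prop :=
  (0 : E) ∈ D ∧
  (∀ x ∈ D, ∀ y ∈ D, x + y ∈ D ∧ A (x + y) = A x + A y) ∧
  (∀ (c : ℝ), ∀ x ∈ D, c • x ∈ D ∧ A (c • x) = c • A x)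

/-- An evolution system `{R(t,s)}_{0 ≤ s ≤ t ≤ T}` on `E`. -/
structure IsEvolutionSystem (T : ℝ) (R : ℝ → ℝ → E →L[ℝ] E) : Prop where
  refl : ∀ t ∈ Icc (0 : ℝ) T, R t t = 1
  comp : ∀ ⦃s r t : ℝ⦄, 0 ≤ s → s ≤ r → r ≤ t → t ≤ T → R t s = (R t r).comp (R r s)
  strong_cont : ∀ x : E, ContinuousOn (fun p : ℝ × ℝ => R p.1 p.2 x)
    {p : ℝ × ℝ | 0 ≤ p.2 ∧ p.2 ≤ p.1 ∧ p.1 ≤ T}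

/-- The parameter domain `{(t,s) : 0 ≤ s ≤ t ≤ T}` of an evolution system. -/
def evolDomain (T : ℝ) : Set (ℝ × ℝ) := {p : ℝ × ℝ | 0 ≤ p.2 ∧ p.2 ≤ p.1 ∧ p.1 ≤ T}

/-- A family `{R^{(λ)}}_{λ∈[0,1]}` of evolution systems is continuous: for every `x ∈ E`
and every sequence `λₙ → λ₀` in `[0,1]`, `R^{(λₙ)}(t,s)x → R^{(λ₀)}(t,s)x` uniformly in
`0 ≤ s ≤ t ≤ T`. -/
def IsContinuousEvolFamily (T : ℝ) (R : ℝ → ℝ → ℝ → E →L[ℝ] E) : Prop :=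
  ∀ (x : E) (l : ℕ → ℝ) (l0 : ℝ), (∀ n, l n ∈ Icc (0 : ℝ) 1) → l0 ∈ Icc (0 : ℝ) 1 →
    Tendsto l atTop (𝓝 l0) →
    TendstoUniformlyOn (fun n p => R (l n) p.1 p.2 x) (fun p => R l0 p.1 p.2 x)
      atTop (evolDomain T)

/-- The map `Σ(x,w,λ)(t) = R^{(λ)}(t,0)x + ∫₀ᵗ R^{(λ)}(t,s) w(s) ds`. -/
def evolMap (R : ℝ → ℝ → E →L[ℝ] E) (x : E) (w : ℝ → E) (t : ℝ) : E :=
  R t 0 x + ∫ s in (0 : ℝ)..t, R t s (w s)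

/-- The Hausdorff measure of noncompactness of a set `Q`. -/
def hausdorffMNC (Q : Set E) : ℝ :=
  sInf {r : ℝ | 0 < r ∧ ∃ c : Finset E, Q ⊆ ⋃ y ∈ c, Metric.ball y r}

variable {V : Type*} [NormedAddCommGroup V] [NormedSpace ℝ V]

/-- The data of a time-dependent family `{A(t)}` of (unbounded) linear operators on `E`:
domains `dom t`, actions `op t`, the C₀ semigroups `sg t = S_{A(t)}`, and the bounded
operators `bdd t ∈ L(V,E)` obtained by restricting `A(t)` to `V` (via the embedding `ι`). -/
structure HypData (E V : Type*) [NormedAddCommGroup E] [NormedSpace ℝ E]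
    [NormedAddCommGroup V] [NormedSpace ℝ V] where
  dom : ℝ → Set E
  op : ℝ → E → E
  sg : ℝ → ℝ → E →L[ℝ] E
  bdd : ℝ → V →L[ℝ] E

/-- Each `A(t)`, `t ∈ [0,T]`, generates the C₀ semigroup `sg t`. -/
def HypGen (T : ℝ) (A : HypData E V) : Prop :=
  ∀ t ∈ Icc (0 : ℝ) T, IsC0Semigroup (A.sg t) ∧ IsGeneratorOf (A.dom t) (A.op t) (A.sg t)

/-- Stability of a family of semigroups: for `0 ≤ t₁ ≤ ⋯ ≤ tₙ ≤ T`, `sᵢ ≥ 0`,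
`‖S(t₁)(s₁)⋯S(tₙ)(sₙ)‖ ≤ M e^{ω(s₁+⋯+sₙ)}`. -/
def StableFamily {F : Type*} [NormedRing F] (T : ℝ) (S : ℝ → ℝ → F) (M ω : ℝ) : Prop :=
  ∀ (n : ℕ) (ts ss : Fin n → ℝ), Monotone ts → (∀ i, ts i ∈ Icc (0 : ℝ) T) →
    (∀ i, 0 ≤ ss i) →
    ‖(List.ofFn fun i => S (ts i) (ss i)).prod‖ ≤ M * Real.exp (ω * ∑ i, ss i)

/-- Condition (Hyp'1): stability with `M = 1` and exponent `−ω`, `ω > 0`. -/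
def Hyp1' (T : ℝ) (A : HypData E V) (ω : ℝ) : Prop :=
  0 < ω ∧ StableFamily T A.sg 1 (-ω)

/-- Condition (Hyp1): stability with constants `M ≥ 1`, `ω ∈ ℝ`. -/
def Hyp1 (T : ℝ) (A : HypData E V) (M ω : ℝ) : Prop :=
  1 ≤ M ∧ StableFamily T A.sg M ω

variable (ι : V →L[ℝ] E)

/-- Condition (Hyp2): `V` is `A(t)`-admissible for each `t` and the family of parts of the
`A(t)` in `V` is stable with constants `M_V`, `ω_V`. -/
def Hyp2 (T : ℝ) (A : HypData E V) (MV ωV : ℝ) : Prop :=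
  ∃ SV : ℝ → ℝ → V →L[ℝ] V,
    (∀ t ∈ Icc (0 : ℝ) T, IsC0Semigroup (SV t)) ∧
    (∀ t ∈ Icc (0 : ℝ) T, ∀ s ≥ (0 : ℝ), ∀ v : V, ι (SV t s v) = A.sg t s (ι v)) ∧
    1 ≤ MV ∧ StableFamily T SV MV ωV

/-- Condition (Hyp3): `V ⊆ D(A(t))`, `A(t)|_V = bdd t ∈ L(V,E)`, and `t ↦ bdd t` is
norm-continuous on `[0,T]`. -/
def Hyp3 (T : ℝ) (A : HypData E V) : Prop :=
  (∀ t ∈ Icc (0 : ℝ) T, ∀ v : V, ι v ∈ A.dom t ∧ A.op t (ι v) = A.bdd t v) ∧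
  ContinuousOn A.bdd (Icc (0 : ℝ) T)

/-- The time average `A₀ = (1/T)∫₀ᵀ A(τ) dτ ∈ L(V,E)`. -/
def timeAvg (T : ℝ) (A : HypData E V) : V →L[ℝ] E :=
  (1 / T) • ∫ τ in (0 : ℝ)..T, A.bdd τ

/-- Condition (Hyp4): there is `μ₀ > −ω` such that `(μ₀ I − A₀)V` is dense in `E`. -/
def Hyp4 (T : ℝ) (A : HypData E V) (ω : ℝ) : Prop :=
  ∃ μ0 : ℝ, -ω < μ0 ∧ Dense (Set.range fun v : V => μ0 • ι v - timeAvg T A v)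

/-- Condition (Hyp5): `A(0) = A(T)` (equal domains and actions). -/
def Hyp5 (T : ℝ) (A : HypData E V) : Prop :=
  A.dom 0 = A.dom T ∧ ∀ x ∈ A.dom 0, A.op 0 x = A.op T x

/-- `R` is the evolution system determined by the family with restrictions `Abdd t ∈ L(V,E)`:
it is an evolution system satisfying the norm bound `‖R(t,s)‖ ≤ M e^{ω(t−s)}`, with
`(∂⁺/∂t)R(t,s)v|_{t=s} = A(s)v` and `(∂/∂s)R(t,s)v = −R(t,s)A(s)v` for `v ∈ V`. -/
def IsDeterminedEvolSystem (T : ℝ) (Abdd : ℝ → V →L[ℝ] E) (M ω : ℝ)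
    (R : ℝ → ℝ → E →L[ℝ] E) : Prop :=
  IsEvolutionSystem T R ∧
  (∀ s t : ℝ, 0 ≤ s → s ≤ t → t ≤ T → ‖R t s‖ ≤ M * Real.exp (ω * (t - s))) ∧
  (∀ v : V, ∀ s ∈ Ico (0 : ℝ) T,
    HasDerivWithinAt (fun t => R t s (ι v)) (Abdd s v) (Ici s) s) ∧
  (∀ v : V, ∀ s t : ℝ, 0 ≤ s → s ≤ t → t ≤ T →
    HasDerivWithinAt (fun r => R t r (ι v)) (-(R t s (Abdd s v))) (Icc (0 : ℝ) t) s)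

variable {ι}

theorem Hyp1'.norm_sg_le {T ω : ℝ} {A : HypData E V} (h1 : Hyp1' T A ω) {t : ℝ}
    (ht : t ∈ Icc (0 : ℝ) T) {s : ℝ} (hs : 0 ≤ s) : ‖A.sg t s‖ ≤ Real.exp (-ω * s) := by
  simpa using h1.2 1 (fun _ => t) (fun _ => s) monotone_const (fun _ => ht) (fun _ => hs)

theorem StrongDual.apply_le_norm {g : StrongDual ℝ E} (hg : ‖g‖ ≤ 1) (z : E) : g z ≤ ‖z‖ :=
  (Real.le_norm_self _).trans (by simpa using g.le_of_opNorm_le hg z)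

/-- Compare right derivatives at `s = 0` in `g (S s x) ≤ e^{a s} ‖x‖`, an equality at `s = 0`. -/
theorem GenLimitAt.apply_le_of_norm_le_exp {S : ℝ → E →L[ℝ] E} {a : ℝ}
    (hS : ∀ s, 0 < s → ‖S s‖ ≤ Real.exp (a * s)) {x y : E} (h : GenLimitAt S x y)
    {g : StrongDual ℝ E} (hg : ‖g‖ ≤ 1) (hgx : g x = ‖x‖) : g y ≤ a * ‖x‖ := by
  have hexp : Tendsto (fun s => s⁻¹ * (Real.exp (a * s) - 1) * ‖x‖) (𝓝[>] 0) (𝓝 (a * ‖x‖)) := by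
    have hderiv : HasDerivAt (fun s => Real.exp (a * s)) a 0 := by
      simpa using ((hasDerivAt_id (0 : ℝ)).const_mul a).exp
    have hslope := (hasDerivAt_iff_tendsto_slope.1 hderiv).mono_left
      (nhdsWithin_mono 0 fun s (hs : 0 < s) => hs.ne')
    exact (hslope.mul_const ‖x‖).congr fun s => by simp [slope_def_field, div_eq_inv_mul]
  refine le_of_tendsto_of_tendsto ((g.continuous.tendsto y).comp h) hexp ?_
  filter_upwards [self_mem_nhdsWithin] with s (hs : 0 < s)
  have hSx : g (S s x) ≤ Real.exp (a * s) * ‖x‖ :=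
    (StrongDual.apply_le_norm hg _).trans (((S s).le_opNorm x).trans (by gcongr; exact hS s hs))
  calc g (s⁻¹ • (S s x - x)) = s⁻¹ * (g (S s x) - ‖x‖) := by simp [hgx]
    _ ≤ s⁻¹ * (Real.exp (a * s) * ‖x‖ - ‖x‖) := by gcongr
    _ = s⁻¹ * (Real.exp (a * s) - 1) * ‖x‖ := by ring

theorem timeAvg_apply_le [CompleteSpace E] {T : ℝ} (hT : 0 < T) {A : HypData E V}
    (hcont : ContinuousOn A.bdd (Icc (0 : ℝ) T)) (g : StrongDual ℝ E) (v : V) {c : ℝ}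
    (hc : ∀ τ ∈ Icc (0 : ℝ) T, g (A.bdd τ v) ≤ c) : g (timeAvg T A v) ≤ c := by
  have hv : ContinuousOn (fun τ => A.bdd τ v) (Icc 0 T) :=
    (ContinuousLinearMap.apply ℝ E v).continuous.comp_continuousOn hcont
  have hgv : ContinuousOn (fun τ => g (A.bdd τ v)) (Icc 0 T) := g.continuous.comp_continuousOn hv
  rw [timeAvg, smul_apply,
    ContinuousLinearMap.intervalIntegral_apply (hcont.intervalIntegrable_of_Icc hT.le),
    _root_.map_smul, ← ContinuousLinearMap.intervalIntegral_comp_comm g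
      (hv.intervalIntegrable_of_Icc hT.le), smul_eq_mul]
  calc 1 / T * ∫ τ in (0 : ℝ)..T, g (A.bdd τ v) ≤ 1 / T * ∫ _ in (0 : ℝ)..T, c := by
        gcongr
        exact intervalIntegral.integral_mono_on hT.le (hgv.intervalIntegrable_of_Icc hT.le)
          intervalIntegrable_const hc
    _ = c := by
        rw [intervalIntegral.integral_const, sub_zero, smul_eq_mul]
        field_simp

/-- `A + ω` is dissipative, stated for the graph `G` of `A` through the resolvent-type bound. -/
def ShiftedDissipative (ω : ℝ) (G : Set (E × E)) : Prop :=
  ∀ μ : ℝ, ∀ p ∈ G, (μ + ω) * ‖p.1‖ ≤ ‖μ • p.1 - p.2‖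

section ShiftedDissipative

variable {ω : ℝ} {G : Set (E × E)}

theorem shiftedDissipative_of_dual
    (h : ∀ p ∈ G, ∃ g : StrongDual ℝ E, ‖g‖ ≤ 1 ∧ g p.1 = ‖p.1‖ ∧ g p.2 ≤ -ω * ‖p.1‖) :
    ShiftedDissipative ω G := by
  intro μ p hp
  obtain ⟨g, hg, hg1, hg2⟩ := h p hp
  calc (μ + ω) * ‖p.1‖ ≤ g (μ • p.1 - p.2) := by
        rw [map_sub, _root_.map_smul, hg1, smul_eq_mul]; linarith
    _ ≤ ‖μ • p.1 - p.2‖ := StrongDual.apply_le_norm hg _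

theorem ShiftedDissipative.closure (h : ShiftedDissipative ω G) :
    ShiftedDissipative ω (closure G) := fun μ =>
  closure_minimal (h μ) <| isClosed_le (f := fun p : E × E => (μ + ω) * ‖p.1‖)
    (g := fun p : E × E => ‖μ • p.1 - p.2‖) (by fun_prop) (by fun_prop)

theorem ShiftedDissipative.norm_le_norm_sub {G : Submodule ℝ (E × E)}
    (hG : ShiftedDissipative ω (G : Set (E × E))) {p : E × E} (hp : p ∈ G) {y : E}
    (hy : ((0 : E), y) ∈ _root_.closure (G : Set (E × E))) : ‖p.1‖ ≤ ‖p.1 - y‖ := by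
  -- the bound at `μ = t⁻¹` for `t • p + (0, y)`, then `t → 0⁺`
  have hbound : ∀ t : ℝ, 0 < t → (1 + t * ω) * ‖p.1‖ ≤ ‖p.1 - t • p.2 - y‖ := by
    intro t ht
    have hq : t • p + (0, y) ∈ _root_.closure (G : Set (E × E)) := by
      rw [← Submodule.topologicalClosure_coe] at hy ⊢
      exact add_mem (Submodule.smul_mem _ t (G.le_topologicalClosure hp)) hy
    have := hG.closure t⁻¹ _ hq
    simp only [Prod.fst_add, Prod.snd_add, Prod.smul_fst, Prod.smul_snd, add_zero,
      smul_smul, inv_mul_cancel₀ ht.ne', one_smul, norm_smul, Real.norm_of_nonneg ht.le] at this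
    calc (1 + t * ω) * ‖p.1‖ = (t⁻¹ + ω) * (t * ‖p.1‖) := by field_simp
      _ ≤ ‖p.1 - t • p.2 - y‖ := by rwa [sub_sub]
  refine le_of_tendsto_of_tendsto (b := 𝓝[>] (0 : ℝ)) ?_ ?_ (eventually_nhdsWithin_of_forall hbound)
  · simpa using ((Continuous.tendsto (by fun_prop) 0).mono_left nhdsWithin_le_nhds :
      Tendsto (fun t : ℝ => (1 + t * ω) * ‖p.1‖) _ _)
  · simpa using ((Continuous.tendsto (by fun_prop) 0).mono_left nhdsWithin_le_nhds :
      Tendsto (fun t : ℝ => ‖p.1 - t • p.2 - y‖) _ _)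

theorem ShiftedDissipative.isClosableOp {D : Set E} {f : E → E} {G : Submodule ℝ (E × E)}
    (hG : opGraph D f = G) (hdiss : ShiftedDissipative ω (opGraph D f)) (hD : Dense D) :
    IsClosableOp D f := by
  intro x y₁ y₂ h₁ h₂
  rw [hG] at h₁ h₂ hdiss
  have h0 : ((0 : E), y₁ - y₂) ∈ _root_.closure (G : Set (E × E)) := by
    rw [← Submodule.topologicalClosure_coe] at h₁ h₂ ⊢
    simpa only [Prod.mk_sub_mk, sub_self, SetLike.mem_coe] using Submodule.sub_mem _ h₁ h₂
  have hle : D ⊆ {z | ‖z‖ ≤ ‖z - (y₁ - y₂)‖} := fun z hz =>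
    hdiss.norm_le_norm_sub (p := (z, f z)) (by rw [← SetLike.mem_coe, ← hG]; exact ⟨hz, rfl⟩) h0
  have := closure_minimal hle (isClosed_le (by fun_prop) (by fun_prop)) (hD (y₁ - y₂))
  simpa [sub_eq_zero] using this

end ShiftedDissipative

theorem IsClosureOf.opGraph_eq {X : Type*} [NormedAddCommGroup X] {D D' : Set X}
    {A' f : X → X} (h : IsClosureOf D' A' D f) (hcl : IsClosableOp D f) :
    opGraph D' A' = closure (opGraph D f) := by
  ext ⟨x, y⟩
  constructor
  · rintro ⟨hx, rfl : y = A' x⟩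
    exact h.2 x hx
  · intro hxy
    have hx : x ∈ D' := (h.1 x).2 ⟨y, hxy⟩
    exact ⟨hx, hcl x y (A' x) hxy (h.2 x hx)⟩

section LinearOp

variable {D : Set E} {A : E → E}

theorem isLinearOp_of_opGraph_eq {G : Submodule ℝ (E × E)} (h : opGraph D A = G) :
    IsLinearOp D A := by
  have mem : ∀ x y, (x, y) ∈ G ↔ x ∈ D ∧ y = A x := fun x y => by
    rw [← SetLike.mem_coe, ← h]; rfl
  have graph : ∀ x ∈ D, (x, A x) ∈ G := fun x hx => (mem _ _).2 ⟨hx, rfl⟩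
  refine ⟨((mem 0 0).1 G.zero_mem).1, fun x hx y hy => ?_, fun c x hx => ?_⟩
  · obtain ⟨hxy, hA⟩ := (mem _ _).1 (G.add_mem (graph x hx) (graph y hy))
    exact ⟨hxy, hA.symm⟩
  · obtain ⟨hcx, hA⟩ := (mem _ _).1 (G.smul_mem c (graph x hx))
    exact ⟨hcx, hA.symm⟩

theorem IsLinearOp.sub_mem (hlin : IsLinearOp D A) {x y : E} (hx : x ∈ D) (hy : y ∈ D) :
    x - y ∈ D ∧ A (x - y) = A x - A y := by
  obtain ⟨hny, hAny⟩ := hlin.2.2 (-1) y hy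
  obtain ⟨hxny, hAxny⟩ := hlin.2.1 x hx _ hny
  simp only [neg_smul, one_smul, ← sub_eq_add_neg] at hny hAny hxny hAxny
  exact ⟨hxny, by rw [hAxny, hAny, sub_eq_add_neg]⟩

theorem image_opGraph_smul_sub (μ : ℝ) :
    (fun p : E × E => μ • p.1 - p.2) '' opGraph D A = {y | ∃ x ∈ D, μ • x - A x = y} := by
  ext y
  constructor
  · rintro ⟨⟨x, z⟩, ⟨hx, rfl : z = A x⟩, rfl⟩
    exact ⟨x, hx, rfl⟩
  · rintro ⟨x, hx, rfl⟩
    exact ⟨(x, A x), ⟨hx, rfl⟩, rfl⟩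

end LinearOp

def MemResolventSet (D : Set E) (A : E → E) (μ : ℝ) : Prop :=
  ∃ B : E →L[ℝ] E, (∀ y : E, B y ∈ D ∧ μ • B y - A (B y) = y) ∧ ∀ x ∈ D, B (μ • x - A x) = x

section Resolvent

variable {D : Set E} {A : E → E} {ω μ ν : ℝ}

theorem ShiftedDissipative.norm_le (hdiss : ShiftedDissipative ω (opGraph D A)) (μ : ℝ)
    {x : E} (hx : x ∈ D) : (μ + ω) * ‖x‖ ≤ ‖μ • x - A x‖ :=
  hdiss μ (x, A x) ⟨hx, rfl⟩

theorem ShiftedDissipative.eq_of_smul_sub_eq (hdiss : ShiftedDissipative ω (opGraph D A))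
    (hlin : IsLinearOp D A) (hμ : -ω < μ) {x₁ x₂ : E} (hx₁ : x₁ ∈ D) (hx₂ : x₂ ∈ D)
    (h : μ • x₁ - A x₁ = μ • x₂ - A x₂) : x₁ = x₂ := by
  obtain ⟨hmem, hA⟩ := hlin.sub_mem hx₁ hx₂
  have hle := hdiss.norm_le μ hmem
  rw [hA, smul_sub, sub_sub_sub_comm, h, sub_self, norm_zero] at hle
  have : ‖x₁ - x₂‖ ≤ 0 := by nlinarith [norm_nonneg (x₁ - x₂)]
  exact sub_eq_zero.1 (norm_le_zero_iff.1 this)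

theorem memResolventSet_of_forall_exists (hlin : IsLinearOp D A)
    (hdiss : ShiftedDissipative ω (opGraph D A)) (hμ : -ω < μ)
    (hsurj : ∀ y, ∃ x ∈ D, μ • x - A x = y) : MemResolventSet D A μ := by
  choose B hBD hB using hsurj
  have hadd : ∀ y z, B (y + z) = B y + B z := fun y z => by
    obtain ⟨hmem, hA⟩ := hlin.2.1 _ (hBD y) _ (hBD z)
    refine hdiss.eq_of_smul_sub_eq hlin hμ (hBD _) hmem ?_
    rw [hB, hA, smul_add, add_sub_add_comm, hB, hB]
  have hsmul : ∀ (c : ℝ) y, B (c • y) = c • B y := fun c y => by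
    obtain ⟨hmem, hA⟩ := hlin.2.2 c _ (hBD y)
    refine hdiss.eq_of_smul_sub_eq hlin hμ (hBD _) hmem ?_
    rw [hB, hA, smul_comm μ c, ← smul_sub, hB]
  have hbound : ∀ y, ‖B y‖ ≤ (μ + ω)⁻¹ * ‖y‖ := fun y => by
    rw [le_inv_mul_iff₀ (by linarith)]
    simpa only [hB] using hdiss.norm_le μ (hBD y)
  exact ⟨LinearMap.mkContinuous ⟨⟨B, hadd⟩, hsmul⟩ _ hbound, fun y => ⟨hBD y, hB y⟩,
    fun x hx => hdiss.eq_of_smul_sub_eq hlin hμ (hBD _) hx (hB _)⟩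

/-- Neumann series: with `R = (ν - A)⁻¹`, `‖R‖ ≤ (ν + ω)⁻¹`, the operator
`(μ - A) R = 1 + (μ - ν) R` is invertible as soon as `|μ - ν| < ν + ω`. -/
theorem MemResolventSet.of_lt [CompleteSpace E] (hres : MemResolventSet D A ν)
    (hlin : IsLinearOp D A) (hdiss : ShiftedDissipative ω (opGraph D A)) (hν : -ω < ν) (hμ : -ω < μ)
    (hμν : μ < 2 * ν + ω) : MemResolventSet D A μ := by
  obtain ⟨B, hB, -⟩ := hres
  have hBnorm : ‖B‖ ≤ (ν + ω)⁻¹ := B.opNorm_le_bound (by simp only [inv_nonneg]; linarith)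
    fun y => (le_inv_mul_iff₀ (by linarith)).2
      ((hdiss.norm_le ν (hB y).1).trans_eq (by rw [(hB y).2]))
  have hsmall : ‖-((μ - ν) • B)‖ < 1 :=
    calc ‖-((μ - ν) • B)‖ ≤ |μ - ν| * (ν + ω)⁻¹ := by
          rw [norm_neg, norm_smul, Real.norm_eq_abs]; gcongr
      _ < (ν + ω) * (ν + ω)⁻¹ := mul_lt_mul_of_pos_right
          (abs_sub_lt_iff.2 ⟨by linarith, by linarith⟩) (inv_pos.2 (by linarith))
      _ = 1 := mul_inv_cancel₀ (by linarith)
  set U := Units.oneSub _ hsmall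
  refine memResolventSet_of_forall_exists hlin hdiss hμ fun y =>
    ⟨B ((↑U⁻¹ : E →L[ℝ] E) y), (hB _).1, ?_⟩
  set z := (↑U⁻¹ : E →L[ℝ] E) y
  have hz : z + (μ - ν) • B z = y := by
    simpa [U, Units.val_oneSub] using congrArg (fun L : E →L[ℝ] E => L y) U.mul_inv
  calc μ • B z - A (B z) = (μ - ν) • B z + (ν • B z - A (B z)) := by rw [sub_smul]; abel
    _ = y := by rw [(hB z).2, ← hz, add_comm]

theorem MemResolventSet.of_gt [CompleteSpace E] (hres : MemResolventSet D A ν)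
    (hlin : IsLinearOp D A) (hdiss : ShiftedDissipative ω (opGraph D A)) (hν : -ω < ν)
    (hμ : -ω < μ) : MemResolventSet D A μ := by
  -- the admissible step `ν + ω` only grows with `ν`, so steps of `(ν + ω) / 2` reach any `μ`
  have hstep : ∀ n : ℕ, MemResolventSet D A (ν + n * ((ν + ω) / 2)) := by
    intro n
    induction n with
    | zero => simpa using hres
    | succ n ih =>
      refine ih.of_lt hlin hdiss ?_ ?_ ?_ <;> push_cast <;> nlinarith
  obtain ⟨n, hn⟩ := exists_nat_gt ((μ - ν) / ((ν + ω) / 2))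
  rw [div_lt_iff₀ (by linarith)] at hn
  exact (hstep n).of_lt hlin hdiss (by nlinarith) hμ (by nlinarith)

theorem isClosed_setOf_smul_sub [CompleteSpace E] (hlin : IsLinearOp D A)
    (hclosed : IsClosed (opGraph D A)) (hdiss : ShiftedDissipative ω (opGraph D A))
    (hμ : -ω < μ) : IsClosed {y | ∃ x ∈ D, μ • x - A x = y} := by
  refine isSeqClosed_iff_isClosed.1 fun ys y hys hy => ?_
  choose xs hxD hxs using hys
  have hdist : ∀ m n, dist (xs m) (xs n) ≤ (μ + ω)⁻¹ * dist (ys m) (ys n) := fun m n => by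
    obtain ⟨hmem, hA⟩ := hlin.sub_mem (hxD m) (hxD n)
    rw [dist_eq_norm, dist_eq_norm, le_inv_mul_iff₀ (by linarith), ← hxs m, ← hxs n,
      sub_sub_sub_comm, ← smul_sub, ← hA]
    exact hdiss.norm_le μ hmem
  have hcauchy : CauchySeq xs := by
    obtain ⟨b, hb0, hb, hlim⟩ := cauchySeq_iff_le_tendsto_0.1 hy.cauchySeq
    refine cauchySeq_iff_le_tendsto_0.2 ⟨fun N => (μ + ω)⁻¹ * b N,
      fun N => mul_nonneg (inv_nonneg.2 (by linarith)) (hb0 N),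
      fun m n N hm hn => (hdist m n).trans
        (mul_le_mul_of_nonneg_left (hb m n N hm hn) (inv_nonneg.2 (by linarith))),
      by simpa using hlim.const_mul (μ + ω)⁻¹⟩
  obtain ⟨x, hx⟩ := cauchySeq_tendsto_of_complete hcauchy
  have hAx : Tendsto (fun n => A (xs n)) atTop (𝓝 (μ • x - y)) :=
    ((hx.const_smul μ).sub hy).congr fun n => by rw [← hxs n, sub_sub_cancel]
  have hgraph : (x, μ • x - y) ∈ opGraph D A :=
    hclosed.mem_of_tendsto (hx.prodMk_nhds hAx) (Eventually.of_forall fun n => ⟨hxD n, rfl⟩)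
  exact ⟨x, hgraph.1, by rw [← hgraph.2, sub_sub_cancel]⟩

end Resolvent

section TimeAverage

variable {T : ℝ} {A : HypData E V} {f : E → E}

theorem opGraph_range_eq (hf : ∀ v : V, f (ι v) = timeAvg T A v) :
    opGraph (range ι) f =
      (LinearMap.range (ι.prod (timeAvg T A) : V →ₗ[ℝ] E × E) : Set (E × E)) := by
  ext ⟨x, y⟩
  simp only [opGraph, mem_ofPred_eq, mem_range, SetLike.mem_coe, LinearMap.mem_range,
    ContinuousLinearMap.coe_coe, ContinuousLinearMap.prod_apply, Prod.mk.injEq]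
  constructor
  · rintro ⟨⟨v, rfl⟩, rfl⟩
    exact ⟨v, rfl, (hf v).symm⟩
  · rintro ⟨v, rfl, rfl⟩
    exact ⟨⟨v, rfl⟩, (hf v).symm⟩

theorem range_smul_sub_timeAvg (hf : ∀ v : V, f (ι v) = timeAvg T A v) (μ : ℝ) :
    range (fun v : V => μ • ι v - timeAvg T A v) =
      (fun p : E × E => μ • p.1 - p.2) '' opGraph (range ι) f := by
  rw [image_opGraph_smul_sub]
  ext y
  simp [hf]

theorem shiftedDissipative_opGraph_timeAvg [CompleteSpace E] {ω : ℝ} (hT : 0 < T)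
    (hgen : HypGen T A) (h1 : Hyp1' T A ω) (h3 : Hyp3 ι T A)
    (hf : ∀ v : V, f (ι v) = timeAvg T A v) : ShiftedDissipative ω (opGraph (range ι) f) := by
  refine shiftedDissipative_of_dual ?_
  rintro ⟨_, y⟩ ⟨⟨v, rfl⟩, rfl : y = f (ι v)⟩
  obtain ⟨g, hg, hgx⟩ := exists_dual_vector'' ℝ (ι v)
  have hgx : g (ι v) = ‖ι v‖ := by simpa using hgx
  refine ⟨g, hg, hgx, ?_⟩
  rw [hf]
  refine timeAvg_apply_le hT h3.2 g v fun τ hτ => ?_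
  have hlim := (hgen τ hτ).2.2 (ι v) (h3.1 τ hτ v).1
  rw [(h3.1 τ hτ v).2] at hlim
  exact hlim.apply_le_of_norm_le_exp (fun s hs => h1.norm_sg_le hτ hs.le) hg hgx

end TimeAverage

theorem statement_14_general
    {E : Type*} [NormedAddCommGroup E] [NormedSpace ℝ E] [CompleteSpace E]
    {V : Type*} [NormedAddCommGroup V] [NormedSpace ℝ V]
    (ι : V →L[ℝ] E) (hιdense : DenseRange ι)
    (T : ℝ) (hT : 0 < T)
    (A : HypData E V) (ω : ℝ)
    (hgen : HypGen T A)
    (h1 : Hyp1' T A ω)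
    (h3 : Hyp3 ι T A)
    (h4 : Hyp4 ι T A ω)
    -- `f` represents `A₀` as an operator in `E` with domain `ι(V)`, and `(D', A')` is its closure
    (f : E → E) (hf : ∀ v : V, f (ι v) = timeAvg T A v)
    (D' : Set E) (A' : E → E) (hclos : IsClosureOf D' A' (Set.range ι) f) :
    ∀ μ : ℝ, -ω < μ →
      (∃ B : E →L[ℝ] E,
        (∀ y : E, B y ∈ D' ∧ μ • B y - A' (B y) = y) ∧
        (∀ x ∈ D', B (μ • x - A' x) = x)) ∧
      Dense (Set.range fun v : V => μ • ι v - timeAvg T A v) := by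
  have hG := opGraph_range_eq hf
  have hdiss := shiftedDissipative_opGraph_timeAvg hT hgen h1 h3 hf
  have hgraph : opGraph D' A' = closure (opGraph (range ι) f) :=
    hclos.opGraph_eq (hdiss.isClosableOp hG hιdense)
  have hlin : IsLinearOp D' A' := isLinearOp_of_opGraph_eq (by
    rw [hgraph, hG, ← Submodule.topologicalClosure_coe])
  have hdiss' : ShiftedDissipative ω (opGraph D' A') := hgraph ▸ hdiss.closure
  have hclosed : IsClosed (opGraph D' A') := hgraph ▸ isClosed_closure
  obtain ⟨μ₀, hμ₀, hdense₀⟩ := h4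
  have hres₀ : MemResolventSet D' A' μ₀ := by
    refine memResolventSet_of_forall_exists hlin hdiss' hμ₀ fun y => ?_
    have hsub : range (fun v : V => μ₀ • ι v - timeAvg T A v) ⊆
        {y | ∃ x ∈ D', μ₀ • x - A' x = y} := by
      rw [range_smul_sub_timeAvg hf, ← image_opGraph_smul_sub, hgraph]
      exact image_mono subset_closure
    exact (isClosed_setOf_smul_sub hlin hclosed hdiss' hμ₀).closure_subset
      (hdense₀.mono hsub y)
  intro μ hμ
  have hres := hres₀.of_gt hlin hdiss' hμ₀ hμ
  refine ⟨hres, fun y => ?_⟩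
  obtain ⟨B, hB, -⟩ := hres
  have hy : y ∈ (fun p : E × E => μ • p.1 - p.2) '' closure (opGraph (range ι) f) := by
    rw [← hgraph, image_opGraph_smul_sub]
    exact ⟨B y, hB y⟩
  rw [range_smul_sub_timeAvg hf]
  exact image_closure_subset_closure_image (by fun_prop) hy

/-- Remark 2(c): under (Hyp'1), (Hyp3) and (Hyp4), the interval `(−ω,∞)`
is contained in the resolvent set of `Â` (the closure of `A₀` with domain `V`), and for every
`μ > −ω` the set `(μI − A₀)V` is dense in `E`. -/
theorem statement_14
    {E : Type*} [NormedAddCommGroup E] [NormedSpace ℝ E] [CompleteSpace E]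
    {V : Type*} [NormedAddCommGroup V] [NormedSpace ℝ V] [CompleteSpace V]
    (ι : V →L[ℝ] E) (hιinj : Function.Injective ι) (hιdense : DenseRange ι)
    (T : ℝ) (hT : 0 < T)
    (A : HypData E V) (ω : ℝ)
    (hgen : HypGen T A)
    (h1 : Hyp1' T A ω)
    (h3 : Hyp3 ι T A)
    (h4 : Hyp4 ι T A ω)
    -- `f` represents `A₀` as an operator in `E` with domain `ι(V)`, and `(D', A')` is its closure
    (f : E → E) (hf : ∀ v : V, f (ι v) = timeAvg T A v)
    (D' : Set E) (A' : E → E) (hclos : IsClosureOf D' A' (Set.range ι) f) :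
    ∀ μ : ℝ, -ω < μ →
      (∃ B : E →L[ℝ] E,
        (∀ y : E, B y ∈ D' ∧ μ • B y - A' (B y) = y) ∧
        (∀ x ∈ D', B (μ • x - A' x) = x)) ∧
      Dense (Set.range fun v : V => μ • ι v - timeAvg T A v) :=
  statement_14_general ι hιdense T hT A ω hgen h1 h3 h4 f hf D' A' hclos
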